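/- arXiv:1602.07675 — 7 statements merged into one kernel-verified Lean document; each statement's English description precedes it below -/
import Mathlib

section
/- Let G be a finite simple graph and Q a nonempty clique of G. If d₁ and d₂ are the degrees in G of the vertices of Q with smallest and largest degree respectively, then η(G) ≥ ⌈(d₁ + 1) / (d₂ − |Q| + 2)⌉. -/
open Classical in
/-- Sum of the labels `f` over the open neighborhood of `v` in `G`. -/
noncomputable def nbrSum {V : Type*} [Fintype V] (G : SimpleGraph V) (f : V → ℕ) (v : V) : ℕ :=
  ∑ w ∈ Finset.univ.filter (fun w => G.Adj v w), f w

open Classical in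
/-- The degree of `v` in `G`. -/
noncomputable def deg {V : Type*} [Fintype V] (G : SimpleGraph V) (v : V) : ℕ :=
  (Finset.univ.filter (fun w => G.Adj v w)).card

/-- `f : V → {1,…,k}` is an additive `k`-coloring of `G`: labels lie in `{1,…,k}` and
adjacent vertices get distinct open-neighborhood sums. -/
def IsAdditiveColoring {V : Type*} [Fintype V] (G : SimpleGraph V) (k : ℕ) (f : V → ℕ) : Prop :=
  (∀ v, 1 ≤ f v ∧ f v ≤ k) ∧ ∀ u v, G.Adj u v → nbrSum G f u ≠ nbrSum G f v

/-- The additive chromatic number `η(G)`: the least `k` admitting an additive `k`-coloring. -/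
noncomputable def eta {V : Type*} [Fintype V] (G : SimpleGraph V) : ℕ :=
  sInf {k | ∃ f : V → ℕ, IsAdditiveColoring G k f}


/-!
Inside a clique `Q` with `q` vertices, every `w ∈ Q` sees `Q \ {w}` and `deg w + 1 - q` further
vertices, so its neighborhood sum is `S - f w` plus a sum of `deg w + 1 - q` labels, where `S` is the
total label of `Q`. For labels in `{1, …, k}` all these `q` sums therefore lie in an integer interval
containing `k (d₂ - q + 2) - d₁ + q - 1` integers; as the vertices of `Q` are pairwise adjacent, the
sums are distinct, and counting gives `d₁ + 1 ≤ k (d₂ - q + 2)`.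
-/

open Finset

theorem Finset.natCast_card_le_of_injOn_Icc {ι : Type*} {s : Finset ι} {g : ι → ℤ} {a b : ℤ}
    (hs : s.Nonempty) (hmaps : ∀ i ∈ s, g i ∈ Icc a b) (hg : Set.InjOn g s) :
    (#s : ℤ) ≤ b + 1 - a := by
  obtain ⟨i, hi⟩ := hs
  have hab : a ≤ b := (mem_Icc.1 (hmaps i hi)).1.trans (mem_Icc.1 (hmaps i hi)).2
  have hcard := card_le_card_of_injOn g hmaps hg
  rw [Int.card_Icc] at hcard
  omega

section AdditiveColoring

open Classical

variable {V : Type*} [Fintype V] {G : SimpleGraph V}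

theorem nbrSum_eq_sum_neighborFinset (f : V → ℕ) (v : V) :
    nbrSum G f v = ∑ w ∈ G.neighborFinset v, f w := by
  rw [SimpleGraph.neighborFinset_eq_filter]
  rfl

theorem deg_eq_card_neighborFinset (v : V) : deg G v = #(G.neighborFinset v) := by
  rw [SimpleGraph.neighborFinset_eq_filter]
  rfl

-- Powers of two make the neighborhood sum determine the neighborhood.
theorem exists_isAdditiveColoring (G : SimpleGraph V) : ∃ k f, IsAdditiveColoring G k f := by
  let e := Fintype.equivFin V
  have he : Function.Injective fun w => (e w : ℕ) := Fin.val_injective.comp e.injective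
  refine ⟨2 ^ Fintype.card V, fun w => 2 ^ (e w : ℕ),
    fun w => ⟨Nat.one_le_two_pow, Nat.pow_le_pow_right two_pos (e w).isLt.le⟩, ?_⟩
  intro a b hab hsum
  simp only [nbrSum_eq_sum_neighborFinset] at hsum
  rw [← sum_image (g := fun w => (e w : ℕ)) (f := (2 ^ ·)) he.injOn,
    ← sum_image (g := fun w => (e w : ℕ)) (f := (2 ^ ·)) he.injOn] at hsum
  have hN : G.neighborFinset a = G.neighborFinset b :=
    image_injective he (geomSum_injective le_rfl hsum)
  have hb : b ∈ G.neighborFinset a := (G.mem_neighborFinset a b).2 hab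
  rw [hN] at hb
  exact G.notMem_neighborFinset_self b hb

theorem exists_isAdditiveColoring_eta (G : SimpleGraph V) : ∃ f, IsAdditiveColoring G (eta G) f :=
  Nat.sInf_mem (exists_isAdditiveColoring G)

variable {Q : Finset V} {w : V}

theorem neighborFinset_inter_eq_erase (hQ : G.IsClique (Q : Set V)) (hw : w ∈ Q) :
    G.neighborFinset w ∩ Q = Q.erase w := by
  ext x
  simp only [mem_inter, SimpleGraph.mem_neighborFinset, mem_erase]
  constructor
  · rintro ⟨hadj, hx⟩
    exact ⟨hadj.ne.symm, hx⟩
  · rintro ⟨hne, hx⟩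
    exact ⟨hQ hw hx hne.symm, hx⟩

theorem card_neighborFinset_sdiff_add_card (hQ : G.IsClique (Q : Set V)) (hw : w ∈ Q) :
    #(G.neighborFinset w \ Q) + #Q = deg G w + 1 := by
  have h := card_sdiff_add_card_inter (G.neighborFinset w) Q
  rw [neighborFinset_inter_eq_erase hQ hw] at h
  rw [deg_eq_card_neighborFinset, ← h, add_assoc, card_erase_add_one hw]

theorem nbrSum_add_self (hQ : G.IsClique (Q : Set V)) (hw : w ∈ Q) (f : V → ℕ) :
    nbrSum G f w + f w = ∑ x ∈ Q, f x + ∑ x ∈ G.neighborFinset w \ Q, f x := by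
  rw [nbrSum_eq_sum_neighborFinset, ← sum_inter_add_sum_sdiff _ Q,
    neighborFinset_inter_eq_erase hQ hw, ← sum_erase_add Q f hw]
  ring

variable {k : ℕ} {f : V → ℕ}

theorem IsAdditiveColoring.injOn_nbrSum (hf : IsAdditiveColoring G k f)
    (hQ : G.IsClique (Q : Set V)) : Set.InjOn (nbrSum G f) Q := by
  intro a ha b hb hab
  by_contra hne
  exact hf.2 a b (hQ ha hb hne) hab

theorem IsAdditiveColoring.sum_add_deg_le (hf : IsAdditiveColoring G k f)
    (hQ : G.IsClique (Q : Set V)) (hw : w ∈ Q) :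
    ∑ x ∈ Q, f x + deg G w + 1 ≤ nbrSum G f w + k + #Q := by
  have hsum := nbrSum_add_self hQ hw f
  have hcard := card_neighborFinset_sdiff_add_card hQ hw
  have hlow : #(G.neighborFinset w \ Q) ≤ ∑ x ∈ G.neighborFinset w \ Q, f x := by
    simpa using card_nsmul_le_sum _ f 1 fun x _ => (hf.1 x).1
  have hfw := (hf.1 w).2
  omega

theorem IsAdditiveColoring.nbrSum_add_le (hf : IsAdditiveColoring G k f)
    (hQ : G.IsClique (Q : Set V)) (hw : w ∈ Q) :
    nbrSum G f w + 1 + k * #Q ≤ ∑ x ∈ Q, f x + k * (deg G w + 1) := by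
  have hsum := nbrSum_add_self hQ hw f
  have hcard := card_neighborFinset_sdiff_add_card hQ hw
  have hhigh : ∑ x ∈ G.neighborFinset w \ Q, f x ≤ k * #(G.neighborFinset w \ Q) := by
    simpa [mul_comm] using sum_le_card_nsmul _ f k fun x _ => (hf.1 x).2
  have hfw := (hf.1 w).1
  rw [← hcard, mul_add]
  omega

theorem IsAdditiveColoring.deg_add_one_le (hf : IsAdditiveColoring G k f)
    (hQ : G.IsClique (Q : Set V)) (hne : Q.Nonempty) {u v : V}
    (hmin : ∀ w ∈ Q, deg G u ≤ deg G w) (hmax : ∀ w ∈ Q, deg G w ≤ deg G v) :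
    (deg G u + 1 : ℤ) ≤ k * (deg G v - #Q + 2) := by
  set S := ∑ x ∈ Q, f x
  have hmaps : ∀ w ∈ Q, (nbrSum G f w : ℤ) ∈
      Icc (S + deg G u + 1 - k - #Q : ℤ) (S + k * (deg G v + 1) - 1 - k * #Q) := by
    intro w hw
    have hlow : (S + deg G w + 1 : ℤ) ≤ nbrSum G f w + k + #Q := by
      exact_mod_cast hf.sum_add_deg_le hQ hw
    have hhigh : (nbrSum G f w + 1 + k * #Q : ℤ) ≤ S + k * (deg G w + 1) := by
      exact_mod_cast hf.nbrSum_add_le hQ hw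
    have hdeg : (k * (deg G w + 1) : ℤ) ≤ k * (deg G v + 1) := by
      gcongr
      exact_mod_cast hmax w hw
    have : (deg G u : ℤ) ≤ deg G w := by exact_mod_cast hmin w hw
    rw [mem_Icc]
    constructor <;> linarith
  have hcard := natCast_card_le_of_injOn_Icc hne hmaps
    (Nat.cast_injective.comp_injOn (hf.injOn_nbrSum hQ))
  linarith

end AdditiveColoring

theorem eta_clique_lower_bound_general {V : Type*} [Fintype V] (G : SimpleGraph V)
    (Q : Finset V) (hQ : Q.Nonempty)
    (hclique : ∀ u ∈ Q, ∀ v ∈ Q, u ≠ v → G.Adj u v)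
    (u v : V)
    (hmin : ∀ w ∈ Q, deg G u ≤ deg G w) (hmax : ∀ w ∈ Q, deg G w ≤ deg G v) :
    ⌈((deg G u : ℚ) + 1) / ((deg G v : ℚ) - (Q.card : ℚ) + 2)⌉ ≤ (eta G : ℤ) := by
  obtain ⟨f, hf⟩ := exists_isAdditiveColoring_eta G
  have key := hf.deg_add_one_le (fun a ha b hb hab => hclique a ha b hb hab) hQ hmin hmax
  have hpos : (0 : ℤ) < deg G v - #Q + 2 :=
    pos_of_mul_pos_right (a := (eta G : ℤ)) (by linarith) (by positivity)
  rw [Int.ceil_le, div_le_iff₀ (by exact_mod_cast hpos)]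
  exact_mod_cast key

/-- For a nonempty clique `Q` with minimum-degree vertex `u` and maximum-degree vertex `v`,
`η(G) ≥ ⌈(d(u) + 1) / (d(v) - |Q| + 2)⌉`. -/
theorem eta_clique_lower_bound {V : Type*} [Fintype V] (G : SimpleGraph V)
    (Q : Finset V) (hQ : Q.Nonempty)
    (hclique : ∀ u ∈ Q, ∀ v ∈ Q, u ≠ v → G.Adj u v)
    (u v : V) (hu : u ∈ Q) (hv : v ∈ Q)
    (hmin : ∀ w ∈ Q, deg G u ≤ deg G w) (hmax : ∀ w ∈ Q, deg G w ≤ deg G v) :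
    ⌈((deg G u : ℚ) + 1) / ((deg G v : ℚ) - (Q.card : ℚ) + 2)⌉ ≤ (eta G : ℤ) :=
  eta_clique_lower_bound_general G Q hQ hclique u v hmin hmax
end

section
/- Let G = (U ∪ V, E) be a finite bipartite graph with bipartition (U, V) such that for every v ∈ V and every u ∈ N(v), d(u) < 2·d(v). If d(u) ≠ d(v) for every edge (u, v) ∈ E then η(G) = 1; otherwise η(G) = 2. -/
/-- For a bipartite graph with sides `U` and `Uᶜ` such that `d(u) < 2·d(v)` for every
`v ∈ Uᶜ` and every neighbor `u` of `v`: if adjacent vertices always have distinct degrees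
then `η(G) = 1`, and otherwise `η(G) = 2`. -/
theorem eta_bipartite_dominated {α : Type*} [Fintype α] [Nonempty α] (G : SimpleGraph α)
    (U : Set α) (hbip : ∀ u v, G.Adj u v → (u ∈ U ↔ v ∉ U))
    (hdeg : ∀ v ∉ U, ∀ u, G.Adj v u → deg G u < 2 * deg G v) :
    ((∀ u v, G.Adj u v → deg G u ≠ deg G v) → eta G = 1) ∧
    ((∃ u v, G.Adj u v ∧ deg G u = deg G v) → eta G = 2) := by
  classical
  have hzero : ∀ f : α → ℕ, ¬ IsAdditiveColoring G 0 f := by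
    intro f hf
    obtain ⟨v⟩ := ‹Nonempty α›
    have := (hf.1 v).1
    have := (hf.1 v).2
    omega
  constructor
  · intro hne
    have h1 : 1 ∈ {k | ∃ f : α → ℕ, IsAdditiveColoring G k f} := by
      refine ⟨fun _ => 1, fun v => ⟨le_refl _, le_refl _⟩, fun u v huv => ?_⟩
      have : ∀ w, nbrSum G (fun _ => 1) w = deg G w := by
        intro w; simp [nbrSum, deg]
      rw [this, this]; exact hne u v huv
    refine le_antisymm (Nat.sInf_le h1) ?_
    refine le_csInf ⟨1, h1⟩ ?_
    rintro k ⟨f, hf⟩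
    rcases Nat.eq_zero_or_pos k with rfl | hk
    · exact absurd hf (hzero f)
    · exact hk
  · rintro ⟨u₀, v₀, huv₀, hdeq⟩
    set f : α → ℕ := fun w => if w ∈ U then 2 else 1 with hfdef
    have hsum : ∀ w, nbrSum G f w = if w ∈ U then deg G w else 2 * deg G w := by
      intro w
      by_cases hw : w ∈ U
      · simp only [hw, if_pos]
        rw [nbrSum, deg, Finset.sum_congr rfl (fun x hx => ?_), Finset.sum_const,
          smul_eq_mul, mul_one]
        have hadj : G.Adj w x := (Finset.mem_filter.mp hx).2
        have : x ∉ U := (hbip w x hadj).mp hw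
        simp [hfdef, this]
      · simp only [hw, if_neg, not_false_iff]
        rw [nbrSum, deg, Finset.sum_congr rfl (fun x hx => ?_), Finset.sum_const,
          smul_eq_mul, mul_comm]
        have hadj : G.Adj w x := (Finset.mem_filter.mp hx).2
        have : x ∈ U := by
          by_contra hxU
          exact hw ((hbip w x hadj).mpr hxU)
        simp [hfdef, this]
    have h2 : 2 ∈ {k | ∃ f : α → ℕ, IsAdditiveColoring G k f} := by
      refine ⟨f, fun v => ?_, fun a b hab => ?_⟩
      · by_cases hv : v ∈ U <;> simp [hfdef, hv]
      · rw [hsum, hsum]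
        -- wlog over which side a is on
        by_cases ha : a ∈ U
        · have hb : b ∉ U := (hbip a b hab).mp ha
          simp only [ha, hb, if_pos, if_neg, not_false_iff]
          have := hdeg b hb a hab.symm
          omega
        · have hb : b ∈ U := by
            by_contra hbU
            exact ha ((hbip a b hab).mpr hbU)
          simp only [ha, hb, if_pos, if_neg, not_false_iff]
          have := hdeg a ha b hab
          omega
    refine le_antisymm (Nat.sInf_le h2) ?_
    refine le_csInf ⟨2, h2⟩ ?_
    rintro k ⟨g, hg⟩
    rcases Nat.lt_or_ge k 2 with hk | hk
    · exfalso
      interval_cases k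
      · exact hzero g hg
      · have hg1 : ∀ v, g v = 1 := by
          intro v
          have := (hg.1 v).1
          have := (hg.1 v).2
          omega
        have : ∀ w, nbrSum G g w = deg G w := by
          intro w
          rw [nbrSum, deg, Finset.sum_congr rfl (fun x _ => hg1 x), Finset.sum_const,
            smul_eq_mul, mul_one]
        exact hg.2 u₀ v₀ huv₀ (by rw [this, this, hdeq])
    · exact hk
end

section
/- Let G = (V₁ ∪ ⋯ ∪ V_r, E) be the complete r-partite graph with nonempty parts V₁, …, V_r satisfying |V_i| ≥ |V_{i+1}| for all i ∈ {1, …, r−1}. Define s_r = |V_r| and s_i = max{1 + s_{i+1}, |V_i|} for i = r−1, …, 1. Then η(G) = max{⌈s_i / |V_i|⌉ : i ∈ {1, …, r}}. -/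
/-!
In a complete multipartite graph the open neighbourhood of `u` is everything outside the part of
`u`, so a labelling is additive exactly when the label sums of the parts are pairwise distinct.
With labels in `{1, …, k}` the sum over part `j` lies in `[n j, k * n j]`.

Lower bound: for `i ≤ j` the parts `i, …, j` have `j - i + 1` distinct sums, all in
`[n j, k * n i]` since `n` is decreasing, so `n j + (j - i) ≤ k * n i`. Unfolding the recursion,
`s i` is the largest of the numbers `n j + (j - i)`, hence `s i ≤ k * n i`.

Upper bound: for `k = max_i ⌈s i / n i⌉` we have `n i ≤ s i ≤ k * n i`, so each part `i` can be
labelled to have sum exactly `s i`, and these sums are distinct because `s` is strictly decreasing.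
-/

open Finset

theorem Finset.exists_sum_eq_of_card_le_of_le_mul {α : Type*} (A : Finset α) {k S : ℕ}
    (h₁ : #A ≤ S) (h₂ : S ≤ k * #A) :
    ∃ f : α → ℕ, (∀ a ∈ A, 1 ≤ f a ∧ f a ≤ k) ∧ ∑ a ∈ A, f a = S := by
  classical
  induction A using Finset.induction_on generalizing S with
  | empty => exact ⟨fun _ => 1, by simp, by simp_all⟩
  | insert a A ha ih =>
    rw [card_insert_of_notMem ha] at h₁ h₂
    rw [mul_add_one] at h₂
    obtain rfl | hk := Nat.eq_zero_or_pos k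
    · omega
    have hA : #A ≤ k * #A := Nat.le_mul_of_pos_left _ hk
    set c := min k (S - #A)
    obtain ⟨f, hf, hsum⟩ := ih (S := S - c) (by omega) (by omega)
    refine ⟨Function.update f a c, fun v hv => ?_, ?_⟩
    · rcases mem_insert.1 hv with rfl | hvA
      · rw [Function.update_self]; omega
      · rw [Function.update_of_ne (by rintro rfl; exact ha hvA)]; exact hf v hvA
    · rw [sum_insert ha, Function.update_self, sum_update_of_notMem ha, hsum]; omega

theorem add_sub_le_of_injOn_Icc {T : ℕ → ℕ} {i j a b : ℕ} (hij : i ≤ j)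
    (hT : Set.InjOn T (Set.Icc i j)) (hbound : ∀ l ∈ Set.Icc i j, a ≤ T l ∧ T l ≤ b) :
    a + (j - i) ≤ b := by
  have hsub : (Icc i j).image T ⊆ Icc a b := by
    simp only [subset_iff, mem_image, mem_Icc]
    rintro _ ⟨l, hl, rfl⟩
    exact hbound l hl
  have hcard := card_le_card hsub
  rw [card_image_of_injOn (by rwa [coe_Icc]), Nat.card_Icc, Nat.card_Icc] at hcard
  have := hbound i ⟨le_rfl, hij⟩
  omega

section Recurrence

variable {r : ℕ} {n s : ℕ → ℕ} (hslast : s (r - 1) = n (r - 1))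
  (hs : ∀ i, i + 1 < r → s i = max (1 + s (i + 1)) (n i))
include hs

theorem strictAntiOn_of_recurrence : StrictAntiOn s (Set.Iio r) :=
  strictAntiOn_of_add_one_lt Set.ordConnected_Iio fun i _ _ hi => by
    rw [hs i hi]; omega

include hslast

theorem le_of_recurrence {i : ℕ} (hi : i < r) : n i ≤ s i := by
  by_cases h : i + 1 < r
  · rw [hs i h]; exact le_max_right _ _
  · obtain rfl : i = r - 1 := by omega
    exact hslast.ge

theorem exists_le_add_sub_of_recurrence {i : ℕ} (hi : i < r) :
    ∃ j, i ≤ j ∧ j < r ∧ s i ≤ n j + (j - i) := by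
  have hir : i ≤ r - 1 := by omega
  induction hir using Nat.decreasingInduction with
  | self => exact ⟨r - 1, le_rfl, hi, by simp [hslast]⟩
  | of_succ i hir ih =>
    obtain ⟨j, hij, hjr, hj⟩ := ih (by omega)
    rw [hs i (by omega)]
    rcases le_total (1 + s (i + 1)) (n i) with h | h
    · exact ⟨i, le_rfl, hi, by simp [h]⟩
    · exact ⟨j, by omega, hjr, by rw [max_eq_left h]; omega⟩

end Recurrence

theorem eta_eq_of_isAdditiveColoring {V : Type*} [Fintype V] {G : SimpleGraph V} {k : ℕ}
    {f : V → ℕ} (hf : IsAdditiveColoring G k f)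
    (hmin : ∀ b g, IsAdditiveColoring G b g → k ≤ b) : eta G = k :=
  le_antisymm (Nat.sInf_le ⟨f, hf⟩) (le_csInf ⟨k, f, hf⟩ fun b ⟨g, hg⟩ => hmin b g hg)

namespace CompleteMultipartite

variable {V : Type*} [Fintype V] {G : SimpleGraph V} {p : V → ℕ}

def part (p : V → ℕ) (i : ℕ) : Finset V := univ.filter (p · = i)

def partSum (p : V → ℕ) (f : V → ℕ) (i : ℕ) : ℕ := ∑ v ∈ part p i, f v

theorem mem_part {i : ℕ} {v : V} : v ∈ part p i ↔ p v = i := by simp [part]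

variable (hadj : ∀ u v, G.Adj u v ↔ p u ≠ p v)
include hadj

theorem nbrSum_add_partSum (f : V → ℕ) (u : V) :
    nbrSum G f u + partSum p f (p u) = ∑ v, f v := by
  classical
  have hnbr : univ.filter (G.Adj u ·) = univ.filter (¬ p · = p u) := by
    ext w; simp [hadj, eq_comm]
  rw [nbrSum, hnbr, add_comm, partSum, part]
  exact sum_filter_add_sum_filter_not _ _ f

theorem isAdditiveColoring_iff {k : ℕ} {f : V → ℕ} :
    IsAdditiveColoring G k f ↔ (∀ v, 1 ≤ f v ∧ f v ≤ k) ∧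
      ∀ u v, p u ≠ p v → partSum p f (p u) ≠ partSum p f (p v) := by
  refine and_congr_right fun _ => forall₂_congr fun u v => ?_
  have hu := nbrSum_add_partSum hadj f u
  have hv := nbrSum_add_partSum hadj f v
  rw [hadj]
  exact imp_congr_right fun _ => not_congr ⟨fun h => by omega, fun h => by omega⟩

theorem exists_isAdditiveColoring {k : ℕ} (t : ℕ → ℕ)
    (ht : ∀ v, #(part p (p v)) ≤ t (p v) ∧ t (p v) ≤ k * #(part p (p v)))
    (hinj : ∀ u v, p u ≠ p v → t (p u) ≠ t (p v)) :
    ∃ f, IsAdditiveColoring G k f := by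
  have hfill : ∀ i, ∃ g : V → ℕ, i ∈ Set.range p →
      (∀ v ∈ part p i, 1 ≤ g v ∧ g v ≤ k) ∧ ∑ v ∈ part p i, g v = t i := by
    intro i
    by_cases hi : i ∈ Set.range p
    · obtain ⟨v, rfl⟩ := hi
      obtain ⟨g, hg⟩ := (part p (p v)).exists_sum_eq_of_card_le_of_le_mul (ht v).1 (ht v).2
      exact ⟨g, fun _ => hg⟩
    · exact ⟨0, fun h => absurd h hi⟩
  choose g hg using hfill
  have hsum : ∀ u, partSum p (fun v => g (p v) v) (p u) = t (p u) := fun u => by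
    rw [← (hg (p u) ⟨u, rfl⟩).2]
    exact sum_congr rfl fun v hv => by beta_reduce; rw [mem_part.1 hv]
  refine ⟨fun v => g (p v) v, (isAdditiveColoring_iff hadj).2 ⟨fun v => ?_, fun u v h => ?_⟩⟩
  · exact (hg (p v) ⟨v, rfl⟩).1 v (mem_part.2 rfl)
  · rw [hsum, hsum]; exact hinj u v h

theorem card_part_add_sub_le_mul {b : ℕ} {f : V → ℕ} (hf : IsAdditiveColoring G b f) {r : ℕ}
    (hne : ∀ i < r, 0 < #(part p i)) (hanti : AntitoneOn (fun i => #(part p i)) (Set.Iio r))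
    {i j : ℕ} (hij : i ≤ j) (hj : j < r) : #(part p j) + (j - i) ≤ b * #(part p i) := by
  obtain ⟨hbd, hdist⟩ := (isAdditiveColoring_iff hadj).1 hf
  refine add_sub_le_of_injOn_Icc hij (T := partSum p f) (fun x hx y hy hxy => ?_) fun l hl => ?_
  · by_contra hxy'
    obtain ⟨u, hu⟩ := card_pos.1 (hne x (hx.2.trans_lt hj))
    obtain ⟨v, hv⟩ := card_pos.1 (hne y (hy.2.trans_lt hj))
    rw [mem_part] at hu hv
    exact hdist u v (by rwa [hu, hv]) (by rwa [hu, hv])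
  have hl' : l < r := hl.2.trans_lt hj
  constructor
  · calc #(part p j) ≤ #(part p l) := hanti hl' hj hl.2
      _ = #(part p l) • 1 := by simp
      _ ≤ partSum p f l := card_nsmul_le_sum _ _ _ fun v _ => (hbd v).1
  · calc partSum p f l ≤ #(part p l) • b := sum_le_card_nsmul _ _ _ fun v _ => (hbd v).2
      _ = b * #(part p l) := by rw [smul_eq_mul, mul_comm]
      _ ≤ b * #(part p i) := Nat.mul_le_mul_left b (hanti (hij.trans_lt hj) hl' hl.1)

end CompleteMultipartite

open CompleteMultipartite

open Classical in
theorem eta_complete_multipartite_general {V : Type*} [Fintype V] (G : SimpleGraph V)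
    (r : ℕ) (p : V → ℕ) (hp : ∀ v, p v < r)
    (hadj : ∀ u v, G.Adj u v ↔ p u ≠ p v)
    (n : ℕ → ℕ) (hn : ∀ i, n i = (Finset.univ.filter fun v => p v = i).card)
    (hne : ∀ i < r, 0 < n i)
    (hmono : ∀ i, i + 1 < r → n (i + 1) ≤ n i)
    (s : ℕ → ℕ) (hslast : s (r - 1) = n (r - 1))
    (hs : ∀ i, i + 1 < r → s i = max (1 + s (i + 1)) (n i)) :
    eta G = (Finset.range r).sup fun i => s i ⌈/⌉ n i := by
  obtain rfl : n = fun i => #(part p i) := funext hn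
  set k := (Finset.range r).sup fun i => s i ⌈/⌉ #(part p i)
  have hsk : ∀ i < r, s i ≤ k * #(part p i) := fun i hi => by
    rw [mul_comm, ← ceilDiv_le_iff_le_mul (hne i hi)]
    exact le_sup (f := fun i => s i ⌈/⌉ #(part p i)) (mem_range.2 hi)
  obtain ⟨f, hf⟩ := exists_isAdditiveColoring hadj s
    (fun v => ⟨le_of_recurrence hslast hs (hp v), hsk _ (hp v)⟩)
    (fun u v h => (strictAntiOn_of_recurrence hs).injOn.ne (hp u) (hp v) h)
  refine eta_eq_of_isAdditiveColoring hf fun b g hg => Finset.sup_le fun i hi => ?_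
  rw [mem_range] at hi
  obtain ⟨j, hij, hjr, hj⟩ := exists_le_add_sub_of_recurrence hslast hs hi
  rw [ceilDiv_le_iff_le_mul (hne i hi), mul_comm]
  exact hj.trans (card_part_add_sub_le_mul hadj hg hne
    (antitoneOn_of_add_one_le Set.ordConnected_Iio fun a _ _ ha => hmono a ha) hij hjr)

open Classical in
/-- For the complete `r`-partite graph with parts of weakly decreasing sizes
`n 0 ≥ n 1 ≥ ⋯ ≥ n (r-1)`, with `s (r-1) = n (r-1)` and
`s i = max (1 + s (i+1)) (n i)`, we have `η(G) = max_i ⌈s i / n i⌉`. -/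
theorem eta_complete_multipartite {V : Type*} [Fintype V] (G : SimpleGraph V)
    (r : ℕ) (hr : 1 ≤ r) (p : V → ℕ) (hp : ∀ v, p v < r)
    (hadj : ∀ u v, G.Adj u v ↔ p u ≠ p v)
    (n : ℕ → ℕ) (hn : ∀ i, n i = (Finset.univ.filter fun v => p v = i).card)
    (hne : ∀ i < r, 0 < n i)
    (hmono : ∀ i, i + 1 < r → n (i + 1) ≤ n i)
    (s : ℕ → ℕ) (hslast : s (r - 1) = n (r - 1))
    (hs : ∀ i, i + 1 < r → s i = max (1 + s (i + 1)) (n i)) :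
    eta G = (Finset.range r).sup fun i => s i ⌈/⌉ n i :=
  eta_complete_multipartite_general G r p hp hadj n hn hne hmono s hslast hs
end

section
/- Let G be the complete r-partite graph with nonempty parts V₁, …, V_r. Then η(G) ≤ r. -/
open Classical in
/-- The complete `r`-partite graph (with nonempty parts) satisfies `η(G) ≤ r`. -/
theorem eta_complete_multipartite_le {V : Type*} [Fintype V] (G : SimpleGraph V)
    (r : ℕ) (p : V → ℕ) (hp : ∀ v, p v < r)
    (hadj : ∀ u v, G.Adj u v ↔ p u ≠ p v)
    (hne : ∀ i < r, ∃ v, p v = i) :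
    eta G ≤ r := by
  classical
  by_cases hV : IsEmpty V
  · have h0 : 0 ∈ {k | ∃ f : V → ℕ, IsAdditiveColoring G k f} :=
      ⟨fun _ => 1, fun v => (hV.false v).elim, fun u v _ => (hV.false u).elim⟩
    exact le_trans (Nat.sInf_le h0) (Nat.zero_le r)
  · have hVne : Nonempty V := not_isEmpty_iff.mp hV
    obtain ⟨v0⟩ := hVne
    have hr : 1 ≤ r := lt_of_le_of_lt (Nat.zero_le _) (hp v0)
    obtain ⟨s, rfl⟩ : ∃ s, r = s + 1 := ⟨r - 1, by omega⟩
    set n : ℕ → ℕ := fun i => (Finset.univ.filter (fun v => p v = i)).card with hn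
    set c : ℕ → ℕ := fun i => (i + s * n i) % (s + 1) with hc
    set rep : ℕ → V := fun i => if h : ∃ v, p v = i then h.choose else v0 with hrepdef
    have hrep : ∀ v : V, p (rep (p v)) = p v := by
      intro v
      have h : ∃ w, p w = p v := ⟨v, rfl⟩
      simp only [hrepdef, dif_pos h]
      exact h.choose_spec
    set f : V → ℕ := fun v => if v = rep (p v) then 1 + c (p v) else 1 with hf
    have hT : ∀ v : V, (∑ w ∈ Finset.univ.filter (fun w => p w = p v), f w)
        = n (p v) + c (p v) := by
      intro v
      have hmem : rep (p v) ∈ Finset.univ.filter (fun w => p w = p v) := by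
        simp [hrep v]
      rw [← Finset.add_sum_erase _ f hmem]
      have h1 : ∀ w ∈ (Finset.univ.filter (fun w => p w = p v)).erase (rep (p v)),
          f w = 1 := by
        intro w hw
        simp only [Finset.mem_erase, Finset.mem_filter] at hw
        have hrw : rep (p w) = rep (p v) := by rw [hw.2.2]
        simp [hf, hrw, hw.1]
      rw [Finset.sum_congr rfl h1, Finset.sum_const, smul_eq_mul, mul_one]
      have hcard : ((Finset.univ.filter (fun w => p w = p v)).erase (rep (p v))).card
          = n (p v) - 1 := by
        rw [Finset.card_erase_of_mem hmem]
      have hfrep : f (rep (p v)) = 1 + c (p v) := by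
        have hpr : p (rep (p v)) = p v := hrep v
        simp [hf, hpr]
      have hnp : 1 ≤ n (p v) := by
        have hne' : (Finset.univ.filter (fun w => p w = p v)).Nonempty := ⟨rep (p v), hmem⟩
        simpa [hn] using Finset.card_pos.mpr hne'
      rw [hfrep, hcard]
      omega
    have hTmod : ∀ v : V, (n (p v) + c (p v)) % (s + 1) = p v := by
      intro v
      rw [hc]
      have h1 : (n (p v) + (p v + s * n (p v)) % (s + 1)) % (s + 1)
          = (n (p v) + (p v + s * n (p v))) % (s + 1) := Nat.add_mod_mod _ _ _
      have h2 : n (p v) + (p v + s * n (p v)) = p v + (s + 1) * n (p v) := by ring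
      rw [h1, h2, Nat.add_mul_mod_self_left, Nat.mod_eq_of_lt (hp v)]
    have hnbr : ∀ u : V, nbrSum G f u
        = ∑ w ∈ Finset.univ.filter (fun w => ¬ p w = p u), f w := by
      intro u
      unfold nbrSum
      refine Finset.sum_congr (Finset.filter_congr fun w _ => ?_) fun _ _ => rfl
      simp only [hadj, eq_iff_iff]
      tauto
    have hsplit : ∀ u : V, (∑ w ∈ Finset.univ.filter (fun w => p w = p u), f w)
        + nbrSum G f u = ∑ w : V, f w := by
      intro u
      rw [hnbr u]
      exact Finset.sum_filter_add_sum_filter_not _ _ _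
    have hcol : IsAdditiveColoring G (s + 1) f := by
      constructor
      · intro v
        constructor
        · simp only [hf]; split <;> omega
        · simp only [hf]
          have hcv : c (p v) < s + 1 := Nat.mod_lt _ (by omega)
          split <;> omega
      · intro u v huv heq
        have hpq : p u ≠ p v := (hadj u v).mp huv
        have hTeq : n (p u) + c (p u) = n (p v) + c (p v) := by
          have h1 := hsplit u
          have h2 := hsplit v
          rw [hT u] at h1
          rw [hT v] at h2
          omega
        have := hTmod u
        rw [hTeq, hTmod v] at this
        exact hpq this.symm
    exact Nat.sInf_le ⟨f, hcol⟩
end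

section
/- Let G = (Q ∪ S, E) be a split graph with clique Q and stable set S, where Q is a maximal clique of G, and let T ⊆ Q be a nonempty set such that the degrees in G of the vertices of T are pairwise distinct. Then η(G) ≤ |Q| − |T| + 1. -/
/-- For a split graph with maximal clique `Q` and stable set `S`, and a nonempty `T ⊆ Q`
whose vertices have pairwise distinct degrees, `η(G) ≤ |Q| - |T| + 1`. -/
theorem eta_split_upper {V : Type*} [Fintype V] (G : SimpleGraph V)
    (Q S : Finset V) (hpart : ∀ v, v ∈ Q ↔ v ∉ S)
    (hQ : ∀ u ∈ Q, ∀ v ∈ Q, u ≠ v → G.Adj u v)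
    (hS : ∀ u ∈ S, ∀ v ∈ S, ¬ G.Adj u v)
    (hQmax : ∀ v ∈ S, ∃ u ∈ Q, ¬ G.Adj v u)
    (T : Finset V) (hTQ : T ⊆ Q) (hTne : T.Nonempty)
    (hdeg : ∀ u ∈ T, ∀ v ∈ T, u ≠ v → deg G u ≠ deg G v) :
    eta G ≤ Q.card - T.card + 1 := by
  classical
  set k := Q.card - T.card + 1 with hkdef
  have hTcard : T.card ≤ Q.card := Finset.card_le_card hTQ
  have hk1 : 1 ≤ k := Nat.le_add_left 1 _
  have hQTcard : (Q \ T).card = k - 1 := by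
    rw [Finset.card_sdiff_of_subset hTQ]; omega
  set e := (Q \ T).equivFin with hedef
  set f : V → ℕ := fun u => if h : u ∈ Q \ T then ((e ⟨u, h⟩ : Fin _) : ℕ) + 2
    else if u ∈ T then 1 else k with hfdef
  have hfT : ∀ u ∈ T, f u = 1 := by
    intro u hu
    have h1 : u ∉ Q \ T := fun h => (Finset.mem_sdiff.1 h).2 hu
    simp only [hfdef]
    rw [dif_neg h1, if_pos hu]
  have hfS : ∀ u ∈ S, f u = k := by
    intro u hu
    have h1 : u ∉ Q := fun h => (hpart u).1 h hu
    have h2 : u ∉ T := fun h => h1 (hTQ h)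
    have h3 : u ∉ Q \ T := fun h => h1 (Finset.mem_sdiff.1 h).1
    simp only [hfdef]
    rw [dif_neg h3, if_neg h2]
  have hfQT : ∀ u, ∀ h : u ∈ Q \ T, f u = (e ⟨u, h⟩ : ℕ) + 2 := by
    intro u h
    simp only [hfdef]
    rw [dif_pos h]
  have hf_lb : ∀ u, 1 ≤ f u := by
    intro u
    by_cases h : u ∈ Q \ T
    · rw [hfQT u h]; omega
    · by_cases h2 : u ∈ T
      · rw [hfT u h2]
      · simp only [hfdef, dif_neg h, if_neg h2]; exact hk1
  have hf_ub : ∀ u, f u ≤ k := by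
    intro u
    by_cases h : u ∈ Q \ T
    · rw [hfQT u h]
      have h2 : ((e ⟨u, h⟩ : Fin _) : ℕ) < k - 1 := (e ⟨u, h⟩).isLt.trans_le (le_of_eq hQTcard)
      omega
    · by_cases h2 : u ∈ T
      · rw [hfT u h2]; exact hk1
      · simp only [hfdef, dif_neg h, if_neg h2]; exact le_refl k
  have hf_inj : ∀ u, ∀ hu : u ∈ Q \ T, ∀ v, ∀ hv : v ∈ Q \ T, f u = f v → u = v := by
    intro u hu v hv h
    rw [hfQT u hu, hfQT v hv] at h
    have h2 : e ⟨u, hu⟩ = e ⟨v, hv⟩ := Fin.ext (by omega)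
    exact congrArg Subtype.val (e.injective h2)
  have hdisj : Disjoint Q S := Finset.disjoint_left.2 fun a ha hb => (hpart a).1 ha hb
  have hunion : Q ∪ S = Finset.univ := by
    ext v
    simp only [Finset.mem_union, Finset.mem_univ, iff_true]
    by_cases h : v ∈ S
    · exact Or.inr h
    · exact Or.inl ((hpart v).2 h)
  set sdeg : V → ℕ := fun u => (S.filter (fun w => G.Adj u w)).card with hsdegdef
  have hsplit : ∀ u, nbrSum G f u =
      (∑ w ∈ Q.filter (fun w => G.Adj u w), f w) + (∑ w ∈ S.filter (fun w => G.Adj u w), f w) := by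
    intro u
    unfold nbrSum
    rw [← hunion, Finset.filter_union, Finset.sum_union (Finset.disjoint_filter_filter hdisj)]
  have hfiltQ : ∀ u ∈ Q, Q.filter (fun w => G.Adj u w) = Q.erase u := by
    intro u hu
    ext w
    simp only [Finset.mem_filter, Finset.mem_erase]
    constructor
    · rintro ⟨hw, hadj⟩; exact ⟨hadj.ne', hw⟩
    · rintro ⟨hne, hw⟩; exact ⟨hw, hQ u hu w hw (Ne.symm hne)⟩
  have hsumS : ∀ u, (∑ w ∈ S.filter (fun w => G.Adj u w), f w) = k * sdeg u := by
    intro u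
    rw [Finset.sum_congr rfl (fun w hw => hfS w (Finset.mem_filter.1 hw).1),
      Finset.sum_const, smul_eq_mul, mul_comm]
  have hnbrQ : ∀ u ∈ Q, nbrSum G f u = (∑ w ∈ Q.erase u, f w) + k * sdeg u := by
    intro u hu; rw [hsplit, hfiltQ u hu, hsumS]
  have hnbrS : ∀ v ∈ S, nbrSum G f v = ∑ w ∈ Q.filter (fun w => G.Adj v w), f w := by
    intro v hv
    rw [hsplit]
    have h1 : S.filter (fun w => G.Adj v w) = ∅ := by
      ext w
      simp only [Finset.mem_filter, Finset.notMem_empty, iff_false, not_and]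
      intro hw; exact hS v hv w hw
    rw [h1]; simp
  have hdegQ : ∀ u ∈ Q, deg G u = (Q.card - 1) + sdeg u := by
    intro u hu
    unfold deg
    rw [← hunion, Finset.filter_union,
      Finset.card_union_of_disjoint (Finset.disjoint_filter_filter hdisj),
      hfiltQ u hu, Finset.card_erase_of_mem hu]
  -- Q vs S edges
  have hQS : ∀ u ∈ Q, ∀ v ∈ S, G.Adj u v → nbrSum G f v < nbrSum G f u := by
    intro u hu v hv hadj
    obtain ⟨u0, hu0Q, hu0⟩ := hQmax v hv
    have hsub : Q.filter (fun w => G.Adj v w) ⊆ Q.erase u0 := by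
      intro w hw
      rw [Finset.mem_filter] at hw
      rw [Finset.mem_erase]
      refine ⟨?_, hw.1⟩
      rintro rfl; exact hu0 hw.2
    have h1 : nbrSum G f v ≤ ∑ w ∈ Q.erase u0, f w := by
      rw [hnbrS v hv]
      exact Finset.sum_le_sum_of_subset hsub
    have h2 : (∑ w ∈ Q.erase u0, f w) + 1 ≤ ∑ w ∈ Q, f w := by
      have h3 := Finset.sum_erase_add Q f hu0Q
      have h4 := hf_lb u0
      omega
    have hs1 : 1 ≤ sdeg u :=
      Finset.card_pos.2 ⟨v, Finset.mem_filter.2 ⟨hv, hadj⟩⟩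
    have hkm : k ≤ k * sdeg u := by
      calc k = k * 1 := (mul_one k).symm
        _ ≤ k * sdeg u := Nat.mul_le_mul_left k hs1
    have h3 : (∑ w ∈ Q, f w) ≤ nbrSum G f u := by
      rw [hnbrQ u hu, ← Finset.sum_erase_add Q f hu]
      exact Nat.add_le_add_left (le_trans (hf_ub u) hkm) _
    omega
  -- Q vs Q edges
  have hQQ : ∀ u ∈ Q, ∀ v ∈ Q, u ≠ v → nbrSum G f u ≠ nbrSum G f v := by
    intro u hu v hv hne heq
    rw [hnbrQ u hu, hnbrQ v hv] at heq
    have h1 := Finset.sum_erase_add Q f hu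
    have h2 := Finset.sum_erase_add Q f hv
    have key : f v + k * sdeg u = f u + k * sdeg v := by
      generalize k * sdeg u = P at heq ⊢
      generalize k * sdeg v = R at heq ⊢
      omega
    have htri : k * sdeg u = k * sdeg v ∨ k * sdeg u + k ≤ k * sdeg v ∨
        k * sdeg v + k ≤ k * sdeg u := by
      rcases Nat.lt_trichotomy (sdeg u) (sdeg v) with h | h | h
      · refine Or.inr (Or.inl ?_)
        calc k * sdeg u + k = k * (sdeg u + 1) := by ring
          _ ≤ k * sdeg v := Nat.mul_le_mul_left k h
      · exact Or.inl (by rw [h])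
      · refine Or.inr (Or.inr ?_)
        calc k * sdeg v + k = k * (sdeg v + 1) := by ring
          _ ≤ k * sdeg u := Nat.mul_le_mul_left k h
    have hfu1 := hf_lb u; have hfu2 := hf_ub u
    have hfv1 := hf_lb v; have hfv2 := hf_ub v
    have hPQ : k * sdeg u = k * sdeg v ∧ f u = f v := by
      generalize hP : k * sdeg u = P at key htri
      generalize hR : k * sdeg v = R at key htri
      omega
    have hseq : sdeg u = sdeg v := Nat.eq_of_mul_eq_mul_left (by omega) hPQ.1
    have hfeq : f u = f v := hPQ.2
    by_cases hu' : u ∈ T <;> by_cases hv' : v ∈ T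
    · exact hdeg u hu' v hv' hne (by rw [hdegQ u hu, hdegQ v hv, hseq])
    · have hvQT : v ∈ Q \ T := Finset.mem_sdiff.2 ⟨hv, hv'⟩
      rw [hfT u hu', hfQT v hvQT] at hfeq
      omega
    · have huQT : u ∈ Q \ T := Finset.mem_sdiff.2 ⟨hu, hu'⟩
      rw [hfT v hv', hfQT u huQT] at hfeq
      omega
    · have huQT : u ∈ Q \ T := Finset.mem_sdiff.2 ⟨hu, hu'⟩
      have hvQT : v ∈ Q \ T := Finset.mem_sdiff.2 ⟨hv, hv'⟩
      exact hne (hf_inj u huQT v hvQT hfeq)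
  have hcol : IsAdditiveColoring G k f := by
    refine ⟨fun v => ⟨hf_lb v, hf_ub v⟩, ?_⟩
    intro u v hadj
    by_cases hu : u ∈ Q <;> by_cases hv : v ∈ Q
    · exact hQQ u hu v hv hadj.ne
    · have hvS : v ∈ S := by by_contra h; exact hv ((hpart v).2 h)
      exact (hQS u hu v hvS hadj).ne'
    · have huS : u ∈ S := by by_contra h; exact hu ((hpart u).2 h)
      exact (hQS v hv u huS hadj.symm).ne
    · have huS : u ∈ S := by by_contra h; exact hu ((hpart u).2 h)
      have hvS : v ∈ S := by by_contra h; exact hv ((hpart v).2 h)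
      exact absurd hadj (hS u huS v hvS)
  rw [eta]
  exact Nat.sInf_le ⟨f, hcol⟩
end

section
/- For every finite split graph G, η(G) ≤ χ(G), where χ(G) is the chromatic number of G; that is, the Additive Coloring Conjecture holds for split graphs. -/
open Finset in
/-- The Additive Coloring Conjecture holds for split graphs: `η(G) ≤ χ(G)`. -/
theorem eta_le_chromatic_of_split {V : Type*} [Fintype V] (G : SimpleGraph V)
    (hsplit : ∃ Q : Set V, (∀ u ∈ Q, ∀ v ∈ Q, u ≠ v → G.Adj u v) ∧
      (∀ u ∉ Q, ∀ v ∉ Q, ¬ G.Adj u v)) :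
    (eta G : ℕ∞) ≤ G.chromaticNumber := by
  classical
  have hcol : G.Colorable (Fintype.card V) := G.colorable_of_fintype
  have hne : G.chromaticNumber ≠ ⊤ :=
    SimpleGraph.chromaticNumber_ne_top_iff_exists.mpr ⟨_, hcol⟩
  set n := G.chromaticNumber.toNat with hn
  have hχ : G.chromaticNumber = (n : ℕ∞) := (ENat.coe_toNat hne).symm
  rw [hχ, Nat.cast_le]
  suffices h : ∃ f : V → ℕ, IsAdditiveColoring G n f from Nat.sInf_le h
  cases isEmpty_or_nonempty V with
  | inl hV =>
    exact ⟨fun _ => 1, fun v => (hV.elim v), fun u v h => (hV.elim u)⟩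
  | inr hV =>
    have hn1 : 1 ≤ n := by
      have h0 : (0 : ℕ∞) < G.chromaticNumber := SimpleGraph.chromaticNumber_pos hcol
      rw [hχ] at h0
      exact_mod_cast h0
    obtain ⟨Q0, hQ0c, hQ0i⟩ := hsplit
    set P : Finset V → Prop := fun Q =>
      (∀ u ∈ Q, ∀ v ∈ Q, u ≠ v → G.Adj u v) ∧
        (∀ u, u ∉ Q → ∀ v, v ∉ Q → ¬ G.Adj u v) with hP
    have hP0 : P Q0.toFinset := by
      constructor
      · intro u hu v hv huv
        exact hQ0c u (Set.mem_toFinset.mp hu) v (Set.mem_toFinset.mp hv) huv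
      · intro u hu v hv
        exact hQ0i u (fun h => hu (Set.mem_toFinset.mpr h)) v
          (fun h => hv (Set.mem_toFinset.mpr h))
    obtain ⟨Q, hQmem, hQmax⟩ := Finset.exists_max_image (univ.filter P) Finset.card
      ⟨Q0.toFinset, mem_filter.mpr ⟨mem_univ _, hP0⟩⟩
    have hQP : P Q := (mem_filter.mp hQmem).2
    have hQc := hQP.1
    have hQi := hQP.2
    have hmax : ∀ Q', P Q' → Q'.card ≤ Q.card := fun Q' h =>
      hQmax Q' (mem_filter.mpr ⟨mem_univ _, h⟩)
    -- every vertex outside Q has a non-neighbor in Q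
    have hnon : ∀ s, s ∉ Q → ∃ w ∈ Q, ¬ G.Adj s w := by
      intro s hs
      by_contra hc
      push_neg at hc
      have hP' : P (insert s Q) := by
        constructor
        · intro u hu v hv huv
          rcases mem_insert.mp hu with rfl | hu'
          · rcases mem_insert.mp hv with rfl | hv'
            · exact absurd rfl huv
            · exact hc v hv'
          · rcases mem_insert.mp hv with rfl | hv'
            · exact (hc u hu').symm
            · exact hQc u hu' v hv' huv
        · intro u hu v hv
          exact hQi u (fun h => hu (mem_insert_of_mem h)) v
            (fun h => hv (mem_insert_of_mem h))
      have hcard := hmax _ hP'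
      rw [card_insert_of_notMem hs] at hcard
      omega
    -- the clique bound
    have hmn : Q.card ≤ n := by
      have hclique : G.IsClique (Q : Set V) := by
        intro u hu v hv huv
        exact hQc u (mem_coe.mp hu) v (mem_coe.mp hv) huv
      have hcc := hclique.card_le_chromaticNumber
      rw [hχ] at hcc
      exact_mod_cast hcc
    -- the labeling
    set e := Q.equivFin with he
    set f : V → ℕ := fun v => if h : v ∈ Q then (e ⟨v, h⟩ : Fin Q.card).val + 1 else n
      with hf
    have hf_mem : ∀ v (h : v ∈ Q), f v = (e ⟨v, h⟩ : Fin Q.card).val + 1 :=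
      fun v h => dif_pos h
    have hf_not : ∀ v, v ∉ Q → f v = n := fun v h => dif_neg h
    have hf1 : ∀ v, 1 ≤ f v := by
      intro v
      by_cases h : v ∈ Q
      · rw [hf_mem v h]; omega
      · rw [hf_not v h]; exact hn1
    have hfn : ∀ v, f v ≤ n := by
      intro v
      by_cases h : v ∈ Q
      · rw [hf_mem v h]
        have := (e ⟨v, h⟩).isLt
        omega
      · rw [hf_not v h]
    have hinj : ∀ u, ∀ hu : u ∈ Q, ∀ v, ∀ hv : v ∈ Q, f u = f v → u = v := by
      intro u hu v hv h
      rw [hf_mem u hu, hf_mem v hv] at h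
      have h2 : e ⟨u, hu⟩ = e ⟨v, hv⟩ := Fin.ext (by omega)
      have h3 := e.injective h2
      exact Subtype.ext_iff.mp h3
    set T := ∑ w ∈ Q, f w with hT
    -- neighborhood sum formula for clique vertices
    have hQsum : ∀ u, ∀ _ : u ∈ Q,
        nbrSum G f u + f u = T + n * ((univ.filter (fun w => G.Adj u w)) \ Q).card := by
      intro u hu
      have hsplitN : univ.filter (fun w => G.Adj u w)
          = Q.erase u ∪ ((univ.filter (fun w => G.Adj u w)) \ Q) := by
        ext w
        simp only [mem_union, mem_filter, mem_univ, true_and, mem_erase, mem_sdiff]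
        constructor
        · intro hw
          by_cases hwQ : w ∈ Q
          · exact Or.inl ⟨fun h => (G.ne_of_adj hw) h.symm, hwQ⟩
          · exact Or.inr ⟨hw, hwQ⟩
        · rintro (⟨hne', hwQ⟩ | ⟨hw, _⟩)
          · exact hQc u hu w hwQ (fun h => hne' h.symm)
          · exact hw
      have hdisj : Disjoint (Q.erase u) ((univ.filter (fun w => G.Adj u w)) \ Q) :=
        Finset.disjoint_sdiff.mono_left (erase_subset u Q)
      have h2 : ∑ w ∈ (univ.filter (fun w => G.Adj u w)) \ Q, f w
          = n * ((univ.filter (fun w => G.Adj u w)) \ Q).card := by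
        rw [Finset.sum_congr rfl (fun w hw => hf_not w (mem_sdiff.mp hw).2),
          Finset.sum_const, smul_eq_mul, mul_comm]
      have h3 : ∑ w ∈ Q.erase u, f w + f u = T := Finset.sum_erase_add Q f hu
      show (∑ w ∈ univ.filter (fun w => G.Adj u w), f w) + f u = _
      conv_lhs => rw [hsplitN]
      rw [Finset.sum_union hdisj, h2, add_right_comm, h3]
    -- neighborhood sum bound for independent vertices
    have hSle : ∀ s, s ∉ Q → nbrSum G f s + 1 ≤ T := by
      intro s hs
      obtain ⟨w, hwQ, hwn⟩ := hnon s hs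
      have hsub : univ.filter (fun x => G.Adj s x) ⊆ Q.erase w := by
        intro x hx
        have hadj : G.Adj s x := (mem_filter.mp hx).2
        have hxQ : x ∈ Q := by
          by_contra hxQ
          exact hQi s hs x hxQ hadj
        refine mem_erase.mpr ⟨?_, hxQ⟩
        rintro rfl
        exact hwn hadj
      have h1 : nbrSum G f s ≤ ∑ x ∈ Q.erase w, f x :=
        Finset.sum_le_sum_of_subset hsub
      have h2 : ∑ x ∈ Q.erase w, f x + f w = T := Finset.sum_erase_add Q f hwQ
      have h3 := hf1 w
      omega
    refine ⟨f, fun v => ⟨hf1 v, hfn v⟩, ?_⟩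
    intro u v huv heq
    by_cases hu : u ∈ Q <;> by_cases hv : v ∈ Q
    · -- both in the clique
      have h1 := hQsum u hu
      have h2 := hQsum v hv
      set a := ((univ.filter (fun w => G.Adj u w)) \ Q).card with ha
      set b := ((univ.filter (fun w => G.Adj v w)) \ Q).card with hb
      set A := n * a with hA
      set B := n * b with hB
      have hfu := hfn u
      have hfv := hfn v
      have hfu1 := hf1 u
      have hfv1 := hf1 v
      rcases Nat.lt_trichotomy a b with hab | hab | hab
      · have hAB : A + n ≤ B := by
          have := Nat.mul_le_mul_left n (Nat.succ_le_of_lt hab)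
          rw [Nat.mul_succ] at this
          omega
        omega
      · have hABeq : A = B := by rw [hA, hB, hab]
        have hfe : f u = f v := by omega
        exact G.ne_of_adj huv (hinj u hu v hv hfe)
      · have hAB : B + n ≤ A := by
          have := Nat.mul_le_mul_left n (Nat.succ_le_of_lt hab)
          rw [Nat.mul_succ] at this
          omega
        omega
    · -- u in clique, v outside
      have h1 := hQsum u hu
      have hvmem : v ∈ (univ.filter (fun w => G.Adj u w)) \ Q :=
        mem_sdiff.mpr ⟨mem_filter.mpr ⟨mem_univ v, huv⟩, hv⟩
      have hcard : 1 ≤ ((univ.filter (fun w => G.Adj u w)) \ Q).card :=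
        card_pos.mpr ⟨v, hvmem⟩
      set A := n * ((univ.filter (fun w => G.Adj u w)) \ Q).card with hA
      have hnA : n ≤ A := Nat.le_mul_of_pos_right n hcard
      have h2 := hSle v hv
      have h3 := hfn u
      omega
    · -- v in clique, u outside
      have h1 := hQsum v hv
      have humem : u ∈ (univ.filter (fun w => G.Adj v w)) \ Q :=
        mem_sdiff.mpr ⟨mem_filter.mpr ⟨mem_univ u, huv.symm⟩, hu⟩
      have hcard : 1 ≤ ((univ.filter (fun w => G.Adj v w)) \ Q).card :=
        card_pos.mpr ⟨u, humem⟩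
      set A := n * ((univ.filter (fun w => G.Adj v w)) \ Q).card with hA
      have hnA : n ≤ A := Nat.le_mul_of_pos_right n hcard
      have h2 := hSle u hu
      have h3 := hfn v
      omega
    · exact hQi u hu v hv huv
end

section
/- Let q ≥ 2 and let G be the thin headless spider of order q: the graph on vertices u₁, …, u_q, v₁, …, v_q where {u₁, …, u_q} is a clique, {v₁, …, v_q} is a stable set, and the only edges between the two sets are (u_i, v_i) for i ∈ {1, …, q}. Then η(G) = ⌈(q + 1)/2⌉. -/
/-- The thin headless spider of order `q`: `Sum.inl i` is the clique vertex `uᵢ`,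
`Sum.inr i` is the stable-set vertex `vᵢ`, and `uᵢ` is adjacent to `vⱼ` iff `i = j`. -/
def thinSpider (q : ℕ) : SimpleGraph (Fin q ⊕ Fin q) where
  Adj x y :=
    match x, y with
    | Sum.inl i, Sum.inl j => i ≠ j
    | Sum.inl i, Sum.inr j => i = j
    | Sum.inr i, Sum.inl j => i = j
    | Sum.inr _, Sum.inr _ => False
  symm := by
    constructor
    rintro (i | i) (j | j) h
    · exact fun e => h e.symm
    · exact h.symm
    · exact h.symm
    · exact h.elim
  loopless := by
    constructor
    rintro (i | i) h
    · exact h rfl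
    · exact h

/-!
The only neighbour of `vᵢ` is `uᵢ`, and the neighbourhood sum of `uᵢ` is the total label of the
clique plus the leg difference `f vᵢ - f uᵢ`. Hence the clique edges say exactly that the `q` leg
differences are distinct; as they lie in `[1 - k, k - 1]`, this forces `q ≤ 2k - 1`. Conversely,
once `q + 1 ≤ 2k`, the leg differences `k - 1, k - 2, …, k - q`, each realised with the smaller
label equal to `1`, give an additive `k`-coloring: the leg edges `uᵢvᵢ` are safe because the sum
at `uᵢ` is at least `q` while `f uᵢ < q`.
-/

lemma add_card_sub_one_le_sum {ι : Type*} [Fintype ι] {g : ι → ℕ} (hg : ∀ j, 1 ≤ g j) (i : ι) :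
    g i + (Fintype.card ι - 1) ≤ ∑ j, g j := by
  classical
  rw [← Finset.add_sum_erase _ _ (Finset.mem_univ i)]
  have := Finset.card_nsmul_le_sum (Finset.univ.erase i) g 1 fun j _ => hg j
  rw [Finset.card_erase_of_mem (Finset.mem_univ i), Finset.card_univ, smul_eq_mul, mul_one] at this
  exact Nat.add_le_add_left this _

namespace thinSpider

variable {q : ℕ}

@[simp] lemma adj_inl_inl {i j : Fin q} : (thinSpider q).Adj (.inl i) (.inl j) ↔ i ≠ j := .rfl
@[simp] lemma adj_inl_inr {i j : Fin q} : (thinSpider q).Adj (.inl i) (.inr j) ↔ i = j := .rfl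
@[simp] lemma adj_inr_inl {i j : Fin q} : (thinSpider q).Adj (.inr i) (.inl j) ↔ i = j := .rfl
@[simp] lemma not_adj_inr_inr {i j : Fin q} : ¬(thinSpider q).Adj (.inr i) (.inr j) := id

lemma nbrSum_inr (f : Fin q ⊕ Fin q → ℕ) (i : Fin q) :
    nbrSum (thinSpider q) f (.inr i) = f (.inl i) := by
  classical
  simp [nbrSum, Finset.sum_filter]

lemma nbrSum_inl (f : Fin q ⊕ Fin q → ℕ) (i : Fin q) :
    nbrSum (thinSpider q) f (.inl i) = ∑ j ∈ Finset.univ.erase i, f (.inl j) + f (.inr i) := by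
  classical
  rw [nbrSum, Finset.sum_filter, Fintype.sum_sum_type]
  simp [Finset.sum_ite, -ne_eq, Finset.filter_ne]

lemma nbrSum_inl_add (f : Fin q ⊕ Fin q → ℕ) (i : Fin q) :
    nbrSum (thinSpider q) f (.inl i) + f (.inl i) = ∑ j, f (.inl j) + f (.inr i) := by
  rw [nbrSum_inl, add_right_comm, Finset.sum_erase_add _ _ (Finset.mem_univ i)]

def legDiff (f : Fin q ⊕ Fin q → ℕ) (i : Fin q) : ℤ :=
  f (.inr i) - f (.inl i)

lemma nbrSum_inl_ne_inl_iff (f : Fin q ⊕ Fin q → ℕ) (i j : Fin q) :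
    nbrSum (thinSpider q) f (.inl i) ≠ nbrSum (thinSpider q) f (.inl j) ↔
      legDiff f i ≠ legDiff f j := by
  have hi := nbrSum_inl_add f i
  have hj := nbrSum_inl_add f j
  unfold legDiff
  omega

lemma nbrSum_inl_ne_inr_iff (f : Fin q ⊕ Fin q → ℕ) (i : Fin q) :
    nbrSum (thinSpider q) f (.inl i) ≠ nbrSum (thinSpider q) f (.inr i) ↔
      ∑ j, f (.inl j) + f (.inr i) ≠ 2 * f (.inl i) := by
  have := nbrSum_inl_add f i
  rw [nbrSum_inr]
  omega

lemma isAdditiveColoring_iff {k : ℕ} {f : Fin q ⊕ Fin q → ℕ} :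
    IsAdditiveColoring (thinSpider q) k f ↔
      (∀ v, 1 ≤ f v ∧ f v ≤ k) ∧ Function.Injective (legDiff f) ∧
        ∀ i, ∑ j, f (.inl j) + f (.inr i) ≠ 2 * f (.inl i) := by
  refine and_congr_right fun _ => ⟨fun h => ⟨fun i j hij => ?_, fun i => ?_⟩, fun ⟨hinj, hleg⟩ => ?_⟩
  · by_contra hne
    exact (nbrSum_inl_ne_inl_iff f i j).1 (h _ _ (adj_inl_inl.2 hne)) hij
  · exact (nbrSum_inl_ne_inr_iff f i).1 (h _ _ (adj_inl_inr.2 rfl))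
  · rintro (i | i) (j | j) hadj
    · exact (nbrSum_inl_ne_inl_iff f i j).2 (hinj.ne hadj)
    · obtain rfl : i = j := hadj
      exact (nbrSum_inl_ne_inr_iff f i).2 (hleg i)
    · obtain rfl : i = j := hadj
      exact ((nbrSum_inl_ne_inr_iff f i).2 (hleg i)).symm
    · exact hadj.elim

lemma le_two_mul_sub_one_of_isAdditiveColoring {k : ℕ} {f : Fin q ⊕ Fin q → ℕ}
    (hf : IsAdditiveColoring (thinSpider q) k f) : q ≤ 2 * k - 1 := by
  obtain ⟨hbound, hinj, -⟩ := isAdditiveColoring_iff.1 hf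
  have hmaps : ∀ i ∈ Finset.univ, legDiff f i ∈ Finset.Icc (1 - k : ℤ) (k - 1) := by
    intro i _
    have := hbound (.inl i)
    have := hbound (.inr i)
    simp only [Finset.mem_Icc, legDiff]
    omega
  have := Finset.card_le_card_of_injOn _ hmaps hinj.injOn
  rw [Finset.card_univ, Fintype.card_fin, Int.card_Icc] at this
  omega

-- Truncated subtraction makes one of the two labels on each leg equal to `1`.
def labeling (k : ℕ) : Fin q ⊕ Fin q → ℕ :=
  Sum.elim (fun i => i + 1 - k + 1) (fun i => k - (i + 1) + 1)

lemma legDiff_labeling (k : ℕ) (i : Fin q) :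
    legDiff (labeling k) i = k - (i + 1 : ℕ) := by
  simp only [legDiff, labeling, Sum.elim_inl, Sum.elim_inr]
  omega

lemma isAdditiveColoring_labeling {k : ℕ} (hq : 2 ≤ q) (hk : q + 1 ≤ 2 * k) :
    IsAdditiveColoring (thinSpider q) k (labeling k) := by
  refine isAdditiveColoring_iff.2 ⟨?_, fun i j hij => ?_, fun i => ?_⟩
  · rintro (i | i) <;> simp only [labeling, Sum.elim_inl, Sum.elim_inr] <;> omega
  · simp only [legDiff_labeling] at hij
    exact Fin.ext (by omega)
  · have hsum := add_card_sub_one_le_sum (g := fun j => labeling k (.inl j))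
      (fun _ => Nat.le_add_left _ _) i
    simp only [labeling, Sum.elim_inl, Sum.elim_inr, Fintype.card_fin] at hsum ⊢
    omega

end thinSpider

/-- The thin headless spider of order `q ≥ 2` satisfies `η(G) = ⌈(q + 1)/2⌉`. -/
theorem eta_thinSpider (q : ℕ) (hq : 2 ≤ q) :
    eta (thinSpider q) = (q + 1) ⌈/⌉ 2 := by
  have hceil (k : ℕ) : (q + 1) ⌈/⌉ 2 ≤ k ↔ q + 1 ≤ 2 * k := ceilDiv_le_iff_le_mul two_pos
  refine IsLeast.csInf_eq ⟨⟨_, thinSpider.isAdditiveColoring_labeling hq ((hceil _).1 le_rfl)⟩, ?_⟩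
  rintro k ⟨f, hf⟩
  have := thinSpider.le_two_mul_sub_one_of_isAdditiveColoring hf
  exact (hceil k).2 (by omega)
end
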